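/- Let f ∈ C¹([-1,0]) with f(-1) = 0 and ω > 0. Then ∫_{-1}^{0} (-z)^{2ω-1} f(z)² dz ≤ (1/ω²) ∫_{-1}^{0} (-z)^{2ω+1} (f'(z))² dz. -/

import Mathlib

/-!
Write `I` and `J` for the two integrals. Integrating `d/dz ((-z)^(2ω) f(z)²)` over `[-1, 0]` gives
`ω I = ∫ (-z)^(2ω) f f'`: the boundary terms vanish because the weight vanishes at `0` and
`f(-1) = 0`. The pointwise Young inequality
`t^(2ω) x y ≤ (ω/2) t^(2ω-1) x² + (1/(2ω)) t^(2ω+1) y²` then gives `ω I ≤ (ω/2) I + J/(2ω)`,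
that is `ω² I ≤ J`.
-/

open Set MeasureTheory intervalIntegral

theorem intervalIntegrable_neg_rpow {r : ℝ} (hr : -1 < r) (a b : ℝ) :
    IntervalIntegrable (fun z : ℝ => (-z) ^ r) volume a b := by
  simpa using
    (IntervalIntegrable.iff_comp_neg).mp (intervalIntegrable_rpow' hr (a := -a) (b := -b))

theorem intervalIntegrable_neg_rpow_mul {r : ℝ} (hr : -1 < r) {g : ℝ → ℝ} {a b : ℝ} (hab : a ≤ b)
    (hg : ContinuousOn g (Icc a b)) :
    IntervalIntegrable (fun z => (-z) ^ r * g z) volume a b :=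
  (intervalIntegrable_neg_rpow hr a b).mul_continuousOn (by rwa [uIcc_of_le hab])

theorem rpow_mul_mul_le_young {t : ℝ} (ht : 0 ≤ t) {ω : ℝ} (hω : 0 < ω) (x y : ℝ) :
    t ^ (2 * ω) * (x * y) ≤
      ω / 2 * (t ^ (2 * ω - 1) * x ^ 2) + 1 / (2 * ω) * (t ^ (2 * ω + 1) * y ^ 2) := by
  have hsplit : t ^ (2 * ω) = t ^ (2 * ω - 1) * t := by
    simpa using Real.rpow_add' ht (y := 2 * ω - 1) (z := 1) (by simp [hω.ne'])
  have hsplit' : t ^ (2 * ω + 1) = t ^ (2 * ω - 1) * t ^ 2 := by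
    rw [← Real.rpow_two, ← Real.rpow_add' ht (by linarith)]
    ring_nf
  rw [hsplit, hsplit', ← sub_nonneg]
  have hs : 0 ≤ t ^ (2 * ω - 1) := Real.rpow_nonneg ht _
  have key : ω / 2 * (t ^ (2 * ω - 1) * x ^ 2) + 1 / (2 * ω) * (t ^ (2 * ω - 1) * t ^ 2 * y ^ 2)
      - t ^ (2 * ω - 1) * t * (x * y) = t ^ (2 * ω - 1) * (ω * x - t * y) ^ 2 / (2 * ω) := by
    field_simp
    ring
  rw [key]
  positivity

theorem continuous_neg_rpow {p : ℝ} (hp : 0 ≤ p) : Continuous fun z : ℝ => (-z) ^ p :=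
  (Real.continuous_rpow_const hp).comp continuous_neg

theorem mul_integral_neg_rpow_mul_sq {f f' : ℝ → ℝ} {a ω : ℝ} (ha : a ≤ 0) (hω : 0 < ω)
    (hf : ContinuousOn f (Icc a 0)) (hderiv : ∀ z ∈ Ioo a 0, HasDerivAt f (f' z) z)
    (hf' : ContinuousOn f' (Icc a 0)) (hfa : f a = 0) :
    ω * ∫ z in a..0, (-z) ^ (2 * ω - 1) * f z ^ 2 = ∫ z in a..0, (-z) ^ (2 * ω) * (f z * f' z) := by
  have hI := intervalIntegrable_neg_rpow_mul (r := 2 * ω - 1) (g := fun z => f z ^ 2)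
    (by linarith) ha (hf.pow 2)
  have hK := intervalIntegrable_neg_rpow_mul (r := 2 * ω) (g := fun z => f z * f' z)
    (by linarith) ha (hf.mul hf')
  have hF : ∀ z ∈ Ioo a 0, HasDerivAt (fun z => (-z) ^ (2 * ω) * f z ^ 2)
      (2 * ((-z) ^ (2 * ω) * (f z * f' z)) - 2 * ω * ((-z) ^ (2 * ω - 1) * f z ^ 2)) z := by
    intro z hz
    have hw' : HasDerivAt (fun z => (-z) ^ (2 * ω)) (-(2 * ω * (-z) ^ (2 * ω - 1))) z := by
      simpa using (hasDerivAt_neg z).rpow_const (p := 2 * ω) (Or.inl (by linarith [hz.2]))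
    have hf2 : HasDerivAt (fun z => f z ^ 2) (2 * f z * f' z) z := by
      simpa using (hderiv z hz).fun_pow 2
    exact (hw'.fun_mul hf2).congr_deriv (by ring)
  have hFTC := integral_eq_sub_of_hasDerivAt_of_le (f := fun z => (-z) ^ (2 * ω) * f z ^ 2) ha
    ((continuous_neg_rpow (by positivity)).continuousOn.mul (hf.pow 2)) hF
    ((hK.const_mul 2).sub (hI.const_mul (2 * ω)))
  rw [integral_sub (hK.const_mul 2) (hI.const_mul (2 * ω)), intervalIntegral.integral_const_mul,
    intervalIntegral.integral_const_mul, hfa, neg_zero, Real.zero_rpow (by positivity)] at hFTC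
  linarith

theorem integral_neg_rpow_mul_mul_le {g h : ℝ → ℝ} {a ω : ℝ} (ha : a ≤ 0) (hω : 0 < ω)
    (hg : ContinuousOn g (Icc a 0)) (hh : ContinuousOn h (Icc a 0)) :
    ∫ z in a..0, (-z) ^ (2 * ω) * (g z * h z) ≤
      ω / 2 * (∫ z in a..0, (-z) ^ (2 * ω - 1) * g z ^ 2) +
        1 / (2 * ω) * ∫ z in a..0, (-z) ^ (2 * ω + 1) * h z ^ 2 := by
  have hI := intervalIntegrable_neg_rpow_mul (r := 2 * ω - 1) (g := fun z => g z ^ 2)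
    (by linarith) ha (hg.pow 2)
  have hJ := intervalIntegrable_neg_rpow_mul (r := 2 * ω + 1) (g := fun z => h z ^ 2)
    (by linarith) ha (hh.pow 2)
  have hK := intervalIntegrable_neg_rpow_mul (r := 2 * ω) (g := fun z => g z * h z)
    (by linarith) ha (hg.mul hh)
  have hmono := integral_mono_on ha hK ((hI.const_mul (ω / 2)).add (hJ.const_mul (1 / (2 * ω))))
    fun z hz => rpow_mul_mul_le_young (by linarith [hz.2]) hω (g z) (h z)
  rwa [integral_add (hI.const_mul _) (hJ.const_mul _), intervalIntegral.integral_const_mul,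
    intervalIntegral.integral_const_mul] at hmono

/-- For `f ∈ C¹([-1,0])` with `f(-1) = 0` and `ω > 0`,
`∫_{-1}^{0} (-z)^{2ω-1} f(z)² dz ≤ (1/ω²) ∫_{-1}^{0} (-z)^{2ω+1} (f'(z))² dz`. -/
theorem stmt_1 (f f' : ℝ → ℝ) (ω : ℝ) (hω : 0 < ω)
    (hderiv : ∀ z ∈ Set.Icc (-1:ℝ) 0, HasDerivWithinAt f (f' z) (Set.Icc (-1:ℝ) 0) z)
    (hcont : ContinuousOn f' (Set.Icc (-1:ℝ) 0))
    (hbc : f (-1) = 0) :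
    ∫ z in (-1:ℝ)..0, (-z) ^ (2*ω - 1) * (f z)^2 ≤
      (1/ω^2) * ∫ z in (-1:ℝ)..0, (-z) ^ (2*ω + 1) * (f' z)^2 := by
  have hf : ContinuousOn f (Icc (-1) 0) := fun z hz => (hderiv z hz).continuousWithinAt
  have hderiv' : ∀ z ∈ Ioo (-1 : ℝ) 0, HasDerivAt f (f' z) z := fun z hz =>
    (hderiv z (Ioo_subset_Icc_self hz)).hasDerivAt (Icc_mem_nhds hz.1 hz.2)
  have hparts := mul_integral_neg_rpow_mul_sq (by norm_num) hω hf hderiv' hcont hbc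
  have hyoung := integral_neg_rpow_mul_mul_le (by norm_num) hω hf hcont
  set I := ∫ z in (-1:ℝ)..0, (-z) ^ (2*ω - 1) * (f z)^2
  set J := ∫ z in (-1:ℝ)..0, (-z) ^ (2*ω + 1) * (f' z)^2
  have hhalf : ω / 2 * I ≤ 1 / (2 * ω) * J := by linarith
  have hIJ : ω ^ 2 * I ≤ J := calc
    ω ^ 2 * I = 2 * ω * (ω / 2 * I) := by ring
    _ ≤ 2 * ω * (1 / (2 * ω) * J) := by gcongr
    _ = J := by field_simp
  rw [div_mul_eq_mul_div, one_mul, le_div_iff₀ (by positivity)]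
  linarith
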